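/- arXiv:0808.0148 — 2 statements merged into one kernel-verified Lean document; each statement's English description precedes it below -/
import Mathlib

section
/- Let G=(V,E) be a connected finite undirected graph with n = |V| ≥ 2. Then the minimum of con_2(F) over all unit K_n-flows F in G equals the maximum of Λ_s(G) over all vertex weightings s: V → ℝ≥0 that are not identically zero. -/
noncomputable section

namespace Formal

/-- Index type of all simple paths in `G`, with ordered endpoints. -/
def PathIdx {V : Type} (G : SimpleGraph V) : Type := Σ u v : V, G.Path u v

instance {V : Type} [Fintype V] [DecidableEq V] (G : SimpleGraph V) [DecidableRel G.Adj] :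
    Fintype (PathIdx G) := by unfold PathIdx; infer_instance

variable {V : Type} [Fintype V] [DecidableEq V]

/-- The congestion that the flow `F` induces at the vertex `v`. -/
def congAt (G : SimpleGraph V) [DecidableRel G.Adj] (F : PathIdx G → ℝ) (v : V) : ℝ :=
  ∑ q : PathIdx G, if v ∈ (q.2.2 : G.Walk q.1 q.2.1).support then F q else 0

/-- The vertex `2`-congestion of a flow. -/
def con2 (G : SimpleGraph V) [DecidableRel G.Adj] (F : PathIdx G → ℝ) : ℝ :=
  Real.sqrt (∑ v : V, (congAt G F v) ^ 2)

/-- The total amount of flow that `F` sends between `u` and `v` (over all simple paths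
between `u` and `v`, in both orientations). -/
def flowBetween (G : SimpleGraph V) [DecidableRel G.Adj] (F : PathIdx G → ℝ) (u v : V) : ℝ :=
  (∑ p : G.Path u v, F ⟨u, v, p⟩) + (∑ p : G.Path v u, F ⟨v, u, p⟩)

/-- A unit `K_n`-flow in `G` (`n = |V|`): one unit of flow between every pair of distinct
vertices of `G`, and no flow on the remaining (trivial) paths. -/
def IsCompleteFlow (G : SimpleGraph V) [DecidableRel G.Adj] (F : PathIdx G → ℝ) : Prop :=
  (∀ q, 0 ≤ F q) ∧ (∀ u v : V, u ≠ v → flowBetween G F u v = 1) ∧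
    (∀ (u : V) (p : G.Path u u), F ⟨u, u, p⟩ = 0)

/-- The semimetric on `V` induced by nonnegative vertex weights `s`: the least total
`s`-weight of the vertices of a path joining `u` and `v`. -/
def dvert {V : Type} [DecidableEq V] (G : SimpleGraph V) (s : V → ℝ) (u v : V) : ℝ :=
  if u = v then 0 else sInf {ℓ : ℝ | ∃ p : G.Walk u v, ℓ = (p.support.map s).sum}

/-- The sum of a (symmetric, vanishing on the diagonal) function over unordered pairs. -/
def pairSum {V : Type} [Fintype V] (f : V → V → ℝ) : ℝ := (∑ u : V, ∑ v : V, f u v) / 2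

/-- The quantity `Λ_s(G) = (Σ_{u,v} d_s(u,v)) / sqrt (Σ_v s(v)²)`. -/
def Lambda {V : Type} [Fintype V] [DecidableEq V] (G : SimpleGraph V) (s : V → ℝ) : ℝ :=
  pairSum (dvert G s) / Real.sqrt (∑ v : V, (s v) ^ 2)

/-!
Weak duality: `d_s(u, v)` is at most the `s`-weight of any path from `u` to `v`, so for every unit
`K_n`-flow `F` the sum `Σ_{u,v} d_s(u, v)` is at most `Σ_q F(q) s(q) = Σ_v s(v) C_F(v)`, where
`s(q)` is the `s`-weight of the path `q`; by Cauchy–Schwarz this is at most `‖s‖₂ con₂(F)`.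

Strong duality: the unit `K_n`-flows form a compact convex set, so `con₂` has a minimizer `F`,
and first-order optimality of the convex quadratic `Σ_v C_F(v)²` gives
`Σ_v C_F(v)² ≤ Σ_v C_F(v) C_{F'}(v)` for every unit `K_n`-flow `F'`. For the weighting
`s = C_F`, choose `F'` routing every pair along `s`-shortest paths: then the right-hand side is
`Σ_{u,v} d_s(u, v)`, hence `Λ_s(G) ≥ ‖s‖₂ = con₂(F)`.
-/

open Finset Filter Topology

def walkWeight {V : Type} {G : SimpleGraph V} {u v : V} (s : V → ℝ) (w : G.Walk u v) : ℝ :=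
  (w.support.map s).sum

def PathIdx.weight {V : Type} {G : SimpleGraph V} (s : V → ℝ) (q : PathIdx G) : ℝ :=
  walkWeight s q.2.2.1

section Walks

variable {V : Type} {G : SimpleGraph V} {s : V → ℝ} {u v : V}

lemma walkWeight_nonneg (hs : ∀ v, 0 ≤ s v) (w : G.Walk u v) : 0 ≤ walkWeight s w :=
  List.sum_nonneg (by simpa using fun x _ => hs x)

lemma walkWeight_reverse (s : V → ℝ) (w : G.Walk u v) :
    walkWeight s w.reverse = walkWeight s w := by
  simp [walkWeight]

lemma walkWeight_bypass_le [DecidableEq V] (hs : ∀ v, 0 ≤ s v) (w : G.Walk u v) :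
    walkWeight s w.bypass ≤ walkWeight s w := by
  obtain ⟨l, hperm, hsub⟩ :=
    List.subperm_of_subset w.bypass_isPath.support_nodup w.support_bypass_subset_support
  rw [walkWeight, walkWeight, ← (hperm.map s).sum_eq]
  exact (hsub.map s).sum_le_sum (by simpa using fun x _ => hs x)

variable [DecidableEq V]

lemma dvert_self (s : V → ℝ) (u : V) : dvert G s u u = 0 := if_pos rfl

lemma dvert_le_walkWeight (hs : ∀ v, 0 ≤ s v) (w : G.Walk u v) :
    dvert G s u v ≤ walkWeight s w := by
  rw [dvert]
  split_ifs
  · exact walkWeight_nonneg hs w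
  · exact csInf_le ⟨0, fun _ ⟨p, hp⟩ => hp ▸ walkWeight_nonneg hs p⟩ ⟨w, rfl⟩

lemma dvert_symm (s : V → ℝ) (u v : V) : dvert G s u v = dvert G s v u := by
  have hset : {ℓ : ℝ | ∃ p : G.Walk u v, ℓ = walkWeight s p} =
      {ℓ : ℝ | ∃ p : G.Walk v u, ℓ = walkWeight s p} := by
    ext ℓ
    constructor <;> rintro ⟨p, rfl⟩ <;> exact ⟨p.reverse, (walkWeight_reverse s p).symm⟩
  unfold dvert
  simp only [eq_comm (a := u)]
  exact congrArg _ (congrArg sInf hset)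

lemma exists_path_walkWeight_eq_dvert [Fintype V] [DecidableRel G.Adj] (hs : ∀ v, 0 ≤ s v)
    (huv : u ≠ v) (h : G.Reachable u v) :
    ∃ p : G.Path u v, walkWeight s p.1 = dvert G s u v := by
  obtain ⟨w₀⟩ := h
  have : Nonempty (G.Path u v) := ⟨w₀.toPath⟩
  obtain ⟨p, -, hp⟩ :=
    exists_min_image univ (fun p : G.Path u v => walkWeight s p.1) univ_nonempty
  refine ⟨p, ?_⟩
  rw [dvert, if_neg huv]
  refine Eq.symm (IsLeast.csInf_eq ⟨⟨p.1, rfl⟩, ?_⟩)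
  rintro _ ⟨w, rfl⟩
  exact (hp w.toPath (mem_univ _)).trans (walkWeight_bypass_le hs w)

end Walks

variable {G : SimpleGraph V} [DecidableRel G.Adj]

lemma sum_pathIdx (f : PathIdx G → ℝ) :
    ∑ q, f q = ∑ u, ∑ v, ∑ p : G.Path u v, f ⟨u, v, p⟩ :=
  (Fintype.sum_sigma f).trans (sum_congr rfl fun _ _ => Fintype.sum_sigma _)

lemma sum_mul_congAt (s : V → ℝ) (F : PathIdx G → ℝ) :
    ∑ v, s v * congAt G F v = ∑ q, F q * q.weight s := by
  simp only [congAt, mul_sum, mul_ite, mul_zero]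
  rw [sum_comm]
  refine sum_congr rfl fun q _ => ?_
  rw [← sum_filter, PathIdx.weight, walkWeight, ← List.sum_toFinset _ q.2.2.2.support_nodup,
    mul_sum]
  exact sum_congr (by ext; simp) fun _ _ => mul_comm _ _

lemma le_congAt {F : PathIdx G → ℝ} (hF : ∀ q, 0 ≤ F q) {q : PathIdx G} {v : V}
    (hv : v ∈ q.2.2.1.support) : F q ≤ congAt G F v := by
  refine le_of_eq_of_le (if_pos hv).symm
    (single_le_sum (f := fun r : PathIdx G => if v ∈ r.2.2.1.support then F r else 0)
      (fun r _ => ?_) (mem_univ q))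
  split_ifs
  exacts [hF r, le_rfl]

lemma congAt_nonneg {F : PathIdx G → ℝ} (hF : ∀ q, 0 ≤ F q) (v : V) : 0 ≤ congAt G F v :=
  sum_nonneg fun q _ => by split_ifs; exacts [hF q, le_rfl]

lemma congAt_smul_add_smul (a b : ℝ) (F F' : PathIdx G → ℝ) (v : V) :
    congAt G (a • F + b • F') v = a * congAt G F v + b * congAt G F' v := by
  simp only [congAt, mul_sum, ← sum_add_distrib]
  exact sum_congr rfl fun q _ => by split_ifs <;> simp

lemma flowBetween_smul_add_smul (a b : ℝ) (F F' : PathIdx G → ℝ) (u v : V) :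
    flowBetween G (a • F + b • F') u v =
      a * flowBetween G F u v + b * flowBetween G F' u v := by
  change ∑ p : G.Path u v, (a * F ⟨u, v, p⟩ + b * F' ⟨u, v, p⟩) +
    ∑ p : G.Path v u, (a * F ⟨v, u, p⟩ + b * F' ⟨v, u, p⟩) = _
  simp only [flowBetween, sum_add_distrib, ← mul_sum]
  ring

lemma IsCompleteFlow.apply_le_one {F : PathIdx G → ℝ} (hF : IsCompleteFlow G F)
    (q : PathIdx G) : F q ≤ 1 := by
  obtain ⟨u, v, p⟩ := q
  by_cases huv : u = v
  · subst huv
    exact (hF.2.2 u p).trans_le zero_le_one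
  calc F ⟨u, v, p⟩ ≤ ∑ p' : G.Path u v, F ⟨u, v, p'⟩ :=
        single_le_sum (f := fun p' => F ⟨u, v, p'⟩) (fun _ _ => hF.1 _) (mem_univ p)
    _ ≤ flowBetween G F u v := le_add_of_nonneg_right (sum_nonneg fun _ _ => hF.1 _)
    _ = 1 := hF.2.1 u v huv

lemma convex_setOf_isCompleteFlow : Convex ℝ {F : PathIdx G → ℝ | IsCompleteFlow G F} := by
  intro F hF F' hF' a b ha hb hab
  refine ⟨fun q => ?_, fun u v huv => ?_, fun u p => ?_⟩
  · exact add_nonneg (mul_nonneg ha (hF.1 q)) (mul_nonneg hb (hF'.1 q))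
  · rw [flowBetween_smul_add_smul, hF.2.1 u v huv, hF'.2.1 u v huv, mul_one, mul_one, hab]
  · change a * F ⟨u, u, p⟩ + b * F' ⟨u, u, p⟩ = 0
    rw [hF.2.2 u p, hF'.2.2 u p, mul_zero, mul_zero, add_zero]

lemma isClosed_setOf_isCompleteFlow : IsClosed {F : PathIdx G → ℝ | IsCompleteFlow G F} := by
  simp only [IsCompleteFlow, Set.ofPred_and, Set.ofPred_forall]
  refine (isClosed_iInter fun q => isClosed_le continuous_const (continuous_apply q)).inter
    ((isClosed_iInter fun u => isClosed_iInter fun v => isClosed_iInter fun _ =>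
      isClosed_eq ?_ continuous_const).inter
    (isClosed_iInter fun u => isClosed_iInter fun p =>
      isClosed_eq (continuous_apply (A := fun _ : PathIdx G => ℝ) _) continuous_const))
  unfold flowBetween
  fun_prop

lemma isCompact_setOf_isCompleteFlow : IsCompact {F : PathIdx G → ℝ | IsCompleteFlow G F} :=
  (isCompact_univ_pi fun _ => isCompact_Icc).of_isClosed_subset isClosed_setOf_isCompleteFlow
    fun _ hF q _ => ⟨hF.1 q, hF.apply_le_one q⟩

lemma continuous_con2 : Continuous (con2 G) := by
  unfold con2 congAt
  refine Real.continuous_sqrt.comp (continuous_finsetSum _ fun v _ =>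
    (continuous_finsetSum _ fun q _ => ?_).pow 2)
  split_ifs <;> fun_prop

lemma IsCompleteFlow.sum_mul_eq_pairSum {F : PathIdx G → ℝ} (hF : IsCompleteFlow G F)
    {f : V → V → ℝ} (hsymm : ∀ u v, f u v = f v u) (hdiag : ∀ u, f u u = 0) :
    ∑ q, F q * f q.1 q.2.1 = pairSum f := by
  set S := ∑ u, ∑ v, f u v * ∑ p : G.Path u v, F ⟨u, v, p⟩
  have hS : ∑ q, F q * f q.1 q.2.1 = S := by
    simp only [sum_pathIdx, S, mul_sum]
    exact sum_congr rfl fun _ _ => sum_congr rfl fun _ _ => sum_congr rfl fun _ _ => mul_comm _ _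
  have hS' : ∑ u, ∑ v, f u v * ∑ p : G.Path v u, F ⟨v, u, p⟩ = S := by
    rw [sum_comm]
    simp only [hsymm _ _, S]
  have hflow : ∀ u v, f u v * flowBetween G F u v = f u v := by
    intro u v
    rcases eq_or_ne u v with rfl | huv
    · rw [hdiag, zero_mul]
    · rw [hF.2.1 u v huv, mul_one]
  rw [hS, pairSum, ← sum_congr rfl fun u _ => sum_congr rfl fun v _ => hflow u v]
  simp only [flowBetween, mul_add, sum_add_distrib, hS']
  ring

lemma pairSum_dvert_le_sum_mul_congAt {F : PathIdx G → ℝ} (hF : IsCompleteFlow G F)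
    {s : V → ℝ} (hs : ∀ v, 0 ≤ s v) :
    pairSum (dvert G s) ≤ ∑ v, s v * congAt G F v := by
  rw [← hF.sum_mul_eq_pairSum (dvert_symm s) (dvert_self s), sum_mul_congAt]
  exact sum_le_sum fun q _ => mul_le_mul_of_nonneg_left (dvert_le_walkWeight hs _) (hF.1 q)

lemma Lambda_le_con2 {F : PathIdx G → ℝ} (hF : IsCompleteFlow G F) {s : V → ℝ}
    (hs : ∀ v, 0 ≤ s v) : Lambda G s ≤ con2 G F := by
  rcases (Real.sqrt_nonneg (∑ v, s v ^ 2)).eq_or_lt with h0 | hpos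
  · rw [Lambda, ← h0, div_zero]
    exact Real.sqrt_nonneg _
  rw [Lambda, div_le_iff₀ hpos, mul_comm]
  exact (pairSum_dvert_le_sum_mul_congAt hF hs).trans (Real.sum_mul_le_sqrt_mul_sqrt _ _ _)

lemma exists_isCompleteFlow_sum_mul_congAt_eq (hG : G.Connected) {s : V → ℝ}
    (hs : ∀ v, 0 ≤ s v) :
    ∃ F, IsCompleteFlow G F ∧ ∑ v, s v * congAt G F v = pairSum (dvert G s) := by
  classical
  have hP : ∀ u v, ∃ p : G.Path u v, u ≠ v → walkWeight s p.1 = dvert G s u v := by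
    intro u v
    rcases eq_or_ne u v with rfl | huv
    · exact ⟨SimpleGraph.Path.nil, fun h => absurd rfl h⟩
    · obtain ⟨p, hp⟩ := exists_path_walkWeight_eq_dvert hs huv (hG u v)
      exact ⟨p, fun _ => hp⟩
  choose P hP using hP
  let F : PathIdx G → ℝ := fun q => if q.1 ≠ q.2.1 ∧ q.2.2 = P q.1 q.2.1 then 2⁻¹ else 0
  have hhalf : ∀ u v, u ≠ v → ∑ p : G.Path u v, F ⟨u, v, p⟩ = 2⁻¹ := by
    intro u v huv
    simp [F, huv]
  have hF : IsCompleteFlow G F := by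
    refine ⟨fun q => ?_, fun u v huv => ?_, fun u p => ?_⟩
    · dsimp only [F]
      split_ifs <;> norm_num
    · rw [flowBetween, hhalf u v huv, hhalf v u huv.symm]
      norm_num
    · simp [F]
  refine ⟨F, hF, ?_⟩
  rw [sum_mul_congAt, ← hF.sum_mul_eq_pairSum (dvert_symm s) (dvert_self s)]
  refine sum_congr rfl fun q _ => ?_
  by_cases hq : q.1 ≠ q.2.1 ∧ q.2.2 = P q.1 q.2.1
  · rw [PathIdx.weight, hq.2, hP _ _ hq.1]
  · simp only [F, if_neg hq, zero_mul]

lemma sum_sq_le_sum_mul_of_forall_le {ι : Type*} (S : Finset ι) (a b : ι → ℝ)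
    (h : ∀ t ∈ Set.Ioc (0 : ℝ) 1,
      ∑ i ∈ S, a i ^ 2 ≤ ∑ i ∈ S, ((1 - t) * a i + t * b i) ^ 2) :
    ∑ i ∈ S, a i ^ 2 ≤ ∑ i ∈ S, a i * b i := by
  set A := ∑ i ∈ S, a i ^ 2
  set P := ∑ i ∈ S, a i * b i
  set Q := ∑ i ∈ S, (b i - a i) ^ 2
  have hexpand : ∀ t : ℝ,
      ∑ i ∈ S, ((1 - t) * a i + t * b i) ^ 2 = A + t * (2 * (P - A) + t * Q) := by
    intro t
    simp only [A, P, Q, mul_sum, ← sum_sub_distrib, ← sum_add_distrib]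
    exact sum_congr rfl fun i _ => by ring
  have hslope : ∀ t ∈ Set.Ioc (0 : ℝ) 1, 0 ≤ 2 * (P - A) + t * Q := fun t ht =>
    nonneg_of_mul_nonneg_right (by linarith [h t ht, hexpand t]) ht.1
  have hlim : Tendsto (fun t : ℝ => 2 * (P - A) + t * Q) (𝓝[>] 0) (𝓝 (2 * (P - A))) := by
    have : Continuous fun t : ℝ => 2 * (P - A) + t * Q := by fun_prop
    simpa using (this.tendsto 0).mono_left nhdsWithin_le_nhds
  have := ge_of_tendsto hlim (eventually_of_mem (Ioc_mem_nhdsGT one_pos) hslope)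
  linarith

lemma IsCompleteFlow.sum_sq_congAt_le_of_forall_con2_le {F F' : PathIdx G → ℝ}
    (hF : IsCompleteFlow G F) (hmin : ∀ F', IsCompleteFlow G F' → con2 G F ≤ con2 G F')
    (hF' : IsCompleteFlow G F') :
    ∑ v, congAt G F v ^ 2 ≤ ∑ v, congAt G F v * congAt G F' v := by
  refine sum_sq_le_sum_mul_of_forall_le _ _ _ fun t ht => ?_
  have hmix := hmin _ (convex_setOf_isCompleteFlow hF hF' (sub_nonneg.2 ht.2) ht.1.le
    (sub_add_cancel 1 t))
  simp only [con2, congAt_smul_add_smul] at hmix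
  exact (Real.sqrt_le_sqrt_iff (sum_nonneg fun _ _ => sq_nonneg _)).1 hmix

lemma exists_isCompleteFlow_forall_con2_le (hG : G.Connected) :
    ∃ F, IsCompleteFlow G F ∧ ∀ F', IsCompleteFlow G F' → con2 G F ≤ con2 G F' := by
  obtain ⟨F₀, hF₀, -⟩ := exists_isCompleteFlow_sum_mul_congAt_eq hG (s := 0) fun _ => le_rfl
  obtain ⟨F, hF, hmin⟩ :=
    isCompact_setOf_isCompleteFlow.exists_isMinOn ⟨F₀, hF₀⟩ continuous_con2.continuousOn
  exact ⟨F, hF, fun F' hF' => hmin hF'⟩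

lemma IsCompleteFlow.Lambda_congAt_eq_con2 (hG : G.Connected) {F : PathIdx G → ℝ}
    (hF : IsCompleteFlow G F) (hmin : ∀ F', IsCompleteFlow G F' → con2 G F ≤ con2 G F') :
    Lambda G (congAt G F) = con2 G F := by
  have hs := congAt_nonneg hF.1
  obtain ⟨F', hF', hF'eq⟩ := exists_isCompleteFlow_sum_mul_congAt_eq hG hs
  refine le_antisymm (Lambda_le_con2 hF hs) ?_
  calc con2 G F = (∑ v, congAt G F v ^ 2) / con2 G F := (Real.div_sqrt).symm
    _ ≤ Lambda G (congAt G F) :=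
      div_le_div_of_nonneg_right (hF'eq ▸ hF.sum_sq_congAt_le_of_forall_con2_le hmin hF')
        (Real.sqrt_nonneg _)

lemma IsCompleteFlow.congAt_ne_zero [Nontrivial V] {F : PathIdx G → ℝ}
    (hF : IsCompleteFlow G F) : congAt G F ≠ 0 := by
  obtain ⟨u, v, huv⟩ := exists_pair_ne V
  obtain ⟨q, hq⟩ : ∃ q, 0 < F q := by
    by_contra! h
    have hnonpos : flowBetween G F u v ≤ 0 :=
      add_nonpos (sum_nonpos fun _ _ => h _) (sum_nonpos fun _ _ => h _)
    linarith [hF.2.1 u v huv]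
  intro h0
  exact hq.not_ge ((le_congAt hF.1 q.2.2.1.start_mem_support).trans_eq (congrFun h0 _))

/-- duality of metrics and flows. For a connected graph `G` on `n ≥ 2`
vertices, the minimum `2`-congestion of a unit `K_n`-flow equals the maximum of `Λ_s(G)`
over nonnegative vertex weightings `s` that are not identically zero. -/
theorem statement_1 {V : Type} [Fintype V] [DecidableEq V]
    (G : SimpleGraph V) [DecidableRel G.Adj] (hG : G.Connected)
    (hn : 2 ≤ Fintype.card V) :
    ∃ m : ℝ,
      IsLeast {c : ℝ | ∃ F : PathIdx G → ℝ, IsCompleteFlow G F ∧ c = con2 G F} m ∧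
      IsGreatest {c : ℝ | ∃ s : V → ℝ, (∀ v, 0 ≤ s v) ∧ s ≠ 0 ∧ c = Lambda G s} m := by
  have : Nontrivial V := Fintype.one_lt_card_iff_nontrivial.1 hn
  obtain ⟨F, hF, hmin⟩ := exists_isCompleteFlow_forall_con2_le hG
  refine ⟨con2 G F, ⟨⟨F, hF, rfl⟩, ?_⟩,
    ⟨⟨congAt G F, congAt_nonneg hF.1, hF.congAt_ne_zero,
      (hF.Lambda_congAt_eq_con2 hG hmin).symm⟩, ?_⟩⟩
  · rintro _ ⟨F', hF', rfl⟩
    exact hmin F' hF'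
  · rintro _ ⟨s, hs, -, rfl⟩
    exact Lambda_le_con2 hF hs

end Formal
end
end

section
/- There is a universal constant c > 0 such that the following holds. Let (X,d) be a finite metric space with n = |X|, and let Δ₂ = sqrt((1/n²)·Σ_{u,v∈X} d(u,v)²). Suppose there exists x₀ ∈ X with |B(x₀, Δ₂/4)| ≥ n/10, where B(x,r) is the closed ball of radius r. Set S = B(x₀, Δ₂/4) and f(u) = d(u,S) = min_{y∈S} d(u,y). Then f is non-expansive and Σ_{u,v∈X} (f(u)−f(v))² ≥ c · Σ_{u,v∈X} d(u,v)². -/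
namespace Formal

/-!
Write `r = Δ₂/4` and `f = d(·, S)`. Since `S ⊆ B(x₀, r)`, `f u ≥ d(u, x₀) - r`, hence
`f u ² ≥ d(u, x₀)²/2 - r²`. By the triangle inequality `Σ_{u,v} d(u,v)² ≤ 4n Σ_u d(u, x₀)²`,
so `Σ_u f u ² ≥ nΔ₂²/8 - nΔ₂²/16 = nΔ₂²/16`. As `f` vanishes on `S`, every `u` contributes at
least `|S| f u ² ≥ (n/10) f u ²` to `Σ_{u,v} (f u - f v)²`, which is therefore at least
`n²Δ₂²/160 = Σ_{u,v} d(u,v)²/160`.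
-/

open Metric Finset

lemma half_sq_sub_sq_le_sq {a r f : ℝ} (ha : 0 ≤ a) (hf : 0 ≤ f) (haf : a - r ≤ f) :
    a ^ 2 / 2 - r ^ 2 ≤ f ^ 2 := by
  rcases le_total a r with h | h
  · nlinarith
  · nlinarith [sq_nonneg (a - 2 * r)]

lemma dist_sub_le_infDist_closedBall {X : Type*} [PseudoMetricSpace X] {c : X} {r : ℝ}
    (hr : 0 ≤ r) (x : X) : dist x c - r ≤ infDist x (closedBall c r) := by
  refine not_lt.1 fun h => ?_
  obtain ⟨y, hy, hxy⟩ := (infDist_lt_iff (nonempty_closedBall.2 hr)).1 h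
  linarith [dist_triangle x y c, mem_closedBall.1 hy]

lemma sum_sum_dist_sq_le {X : Type*} [PseudoMetricSpace X] [Fintype X] (c : X) :
    ∑ u : X, ∑ v : X, dist u v ^ 2 ≤ 4 * Fintype.card X * ∑ u : X, dist u c ^ 2 := by
  have hpair (u v : X) : dist u v ^ 2 ≤ 2 * dist u c ^ 2 + 2 * dist v c ^ 2 := by
    nlinarith [dist_triangle_right u v c, dist_nonneg (x := u) (y := v),
      sq_nonneg (dist u c - dist v c)]
  calc ∑ u : X, ∑ v : X, dist u v ^ 2
      ≤ ∑ u : X, ∑ v : X, (2 * dist u c ^ 2 + 2 * dist v c ^ 2) :=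
        sum_le_sum fun u _ => sum_le_sum fun v _ => hpair u v
    _ = 4 * Fintype.card X * ∑ u : X, dist u c ^ 2 := by
        simp only [sum_add_distrib, sum_const, card_univ, nsmul_eq_mul, ← mul_sum]
        ring

lemma card_mul_sum_sq_le_sum_sum_sq_sub {ι : Type*} [Fintype ι] {f : ι → ℝ} {s : Set ι}
    (hf : ∀ v ∈ s, f v = 0) :
    (s.ncard : ℝ) * ∑ u, f u ^ 2 ≤ ∑ u, ∑ v, (f u - f v) ^ 2 := by
  classical
  rw [Set.ncard_eq_toFinset_card' s, mul_sum]
  refine sum_le_sum fun u _ => ?_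
  calc (s.toFinset.card : ℝ) * f u ^ 2 = ∑ v ∈ s.toFinset, (f u - f v) ^ 2 := by
        rw [sum_congr rfl fun v hv => by rw [hf v (Set.mem_toFinset.1 hv), sub_zero],
          sum_const, nsmul_eq_mul]
    _ ≤ ∑ v, (f u - f v) ^ 2 :=
        sum_le_sum_of_subset_of_nonneg (subset_univ _) fun _ _ _ => sq_nonneg _

lemma sq_mul_sqrt_div_sq_sq {n T : ℝ} (hT : 0 ≤ T) (hn : n = 0 → T = 0) :
    n ^ 2 * Real.sqrt (T / n ^ 2) ^ 2 = T := by
  rw [Real.sq_sqrt (by positivity)]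
  rcases eq_or_ne n 0 with h | h
  · simp [h, hn h]
  · field_simp

/-- There is a universal constant `c > 0` such that: in any finite
metric space, if the closed ball of radius `Δ₂/4` around some point `x₀` contains at
least `n/10` points (where `Δ₂² = (1/n²)·Σ_{u,v} d(u,v)²`), then the map
`f(u) = d(u, S)` with `S = B(x₀, Δ₂/4)` is non-expansive and satisfies
`Σ_{u,v} (f(u) - f(v))² ≥ c·Σ_{u,v} d(u,v)²`. -/
theorem statement_15 :
    ∃ c : ℝ, 0 < c ∧
      ∀ (X : Type) [MetricSpace X] [Fintype X] (x₀ : X) (Δ₂ : ℝ),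
        Δ₂ = Real.sqrt ((∑ u : X, ∑ v : X, dist u v ^ 2) / (Fintype.card X : ℝ) ^ 2) →
        (Fintype.card X : ℝ) / 10 ≤ ((Metric.closedBall x₀ (Δ₂ / 4)).ncard : ℝ) →
        (∀ u v : X,
          |Metric.infDist u (Metric.closedBall x₀ (Δ₂ / 4)) -
              Metric.infDist v (Metric.closedBall x₀ (Δ₂ / 4))| ≤ dist u v) ∧
        c * ∑ u : X, ∑ v : X, dist u v ^ 2 ≤
          ∑ u : X, ∑ v : X,
            (Metric.infDist u (Metric.closedBall x₀ (Δ₂ / 4)) -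
              Metric.infDist v (Metric.closedBall x₀ (Δ₂ / 4))) ^ 2 := by
  refine ⟨1 / 160, by norm_num, fun X _ _ x₀ Δ₂ hΔ hcard => ⟨fun u v => ?_, ?_⟩⟩
  · simpa [← Real.dist_eq] using (lipschitz_infDist_pt (closedBall x₀ (Δ₂ / 4))).dist_le_mul u v
  set S := closedBall x₀ (Δ₂ / 4)
  set n : ℝ := (Fintype.card X : ℝ)
  set T := ∑ u : X, ∑ v : X, dist u v ^ 2
  have hr : 0 ≤ Δ₂ / 4 := by rw [hΔ]; positivity
  have hT : n ^ 2 * Δ₂ ^ 2 = T := hΔ ▸ sq_mul_sqrt_div_sq_sq (by positivity) fun hn => by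
    have : IsEmpty X := Fintype.card_eq_zero_iff.1 (Nat.cast_eq_zero.1 hn)
    simp [T]
  have hfsq : (∑ u : X, dist u x₀ ^ 2) / 2 - n * (Δ₂ / 4) ^ 2 ≤ ∑ u : X, infDist u S ^ 2 := by
    have hpoint (u : X) : dist u x₀ ^ 2 / 2 - (Δ₂ / 4) ^ 2 ≤ infDist u S ^ 2 :=
      half_sq_sub_sq_le_sq dist_nonneg infDist_nonneg (dist_sub_le_infDist_closedBall hr u)
    simpa only [sum_sub_distrib, ← sum_div, sum_const, card_univ, nsmul_eq_mul] using
      sum_le_sum fun u (_ : u ∈ univ) => hpoint u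
  calc 1 / 160 * T ≤ n / 10 * ((∑ u : X, dist u x₀ ^ 2) / 2 - n * (Δ₂ / 4) ^ 2) := by
        nlinarith [sum_sum_dist_sq_le x₀]
    _ ≤ n / 10 * ∑ u : X, infDist u S ^ 2 := by gcongr
    _ ≤ S.ncard * ∑ u : X, infDist u S ^ 2 := by gcongr
    _ ≤ _ := card_mul_sum_sq_le_sum_sum_sq_sub fun v hv => infDist_zero_of_mem hv

end Formal
end
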